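/- arXiv:2601.07156 — 3 statements merged into one kernel-verified Lean document; each statement's English description precedes it below -/
import Mathlib

section
/- If the true state X satisfies dX/dt = [X,H] + X V and the estimate X̂ satisfies dX̂/dt = [X̂,H] + X̂ V + Δ X̂ (for matrices H, V, Δ of matching dimension), then the right-invariant error E = X X̂^{-1} satisfies dE/dt = [E, H] - E Δ, where [A,B] = AB - BA. -/
/-! Differentiating `E = X X̂⁻¹` by the product rule and `(X̂⁻¹)' = -X̂⁻¹ X̂' X̂⁻¹` gives
`E' = (X' - E X̂') X̂⁻¹`. Substituting the two dynamics, the common input `V` cancels because it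
multiplies both `X` and `X̂` on the right, the terms `X H X̂⁻¹` cancel likewise, and the
innovation `Δ X̂` contributes `-E Δ X̂ X̂⁻¹ = -E Δ`. -/

open Matrix Ring

attribute [local instance] Matrix.linftyOpNormedRing Matrix.linftyOpNormedAlgebra

section NormedAlgebra

variable {𝕜 R : Type*} [NontriviallyNormedField 𝕜] [NormedRing R] [HasSummableGeomSeries R]
  [NormedAlgebra 𝕜 R] {f g : 𝕜 → R} {f' g' : R} {t : 𝕜}

theorem HasDerivAt.ringInverse (hg : HasDerivAt g g' t) (ht : IsUnit (g t)) :
    HasDerivAt (fun s => (g s)⁻¹ʳ) (-((g t)⁻¹ʳ * g' * (g t)⁻¹ʳ)) t := by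
  obtain ⟨u, hu⟩ := ht
  have hinv := (hu ▸ hasFDerivAt_ringInverse (𝕜 := 𝕜) u).comp_hasDerivAt t hg
  simpa [Function.comp_def, ← hu, Ring.inverse_unit, mul_assoc] using hinv

theorem HasDerivAt.mul_ringInverse (hf : HasDerivAt f f' t) (hg : HasDerivAt g g' t)
    (ht : IsUnit (g t)) :
    HasDerivAt (fun s => f s * (g s)⁻¹ʳ) ((f' - f t * (g t)⁻¹ʳ * g') * (g t)⁻¹ʳ) t := by
  convert hf.fun_mul (hg.ringInverse ht) using 1
  noncomm_ring

end NormedAlgebra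

theorem rightInvariantError_derivative_eq {R : Type*} [Ring R] {x y : R} (hy : IsUnit y)
    (H V Δ : R) :
    (x * H - H * x + x * V - x * y⁻¹ʳ * (y * H - H * y + y * V + Δ * y)) * y⁻¹ʳ
      = x * y⁻¹ʳ * H - H * (x * y⁻¹ʳ) - x * y⁻¹ʳ * Δ := by
  simp only [mul_add, add_mul, mul_sub, sub_mul, mul_assoc, Ring.inverse_mul_cancel_left _ _ hy,
    Ring.mul_inverse_cancel _ hy, mul_one]
  abel

theorem error_dynamics_general {m : ℕ}
    (X Xhat : ℝ → Matrix (Fin m) (Fin m) ℝ)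
    (H : Matrix (Fin m) (Fin m) ℝ)
    (V Δ : ℝ → Matrix (Fin m) (Fin m) ℝ)
    (hXhatinv : ∀ t, IsUnit (Xhat t))
    (hX : ∀ t, HasDerivAt X (X t * H - H * X t + X t * V t) t)
    (hXhat : ∀ t, HasDerivAt Xhat (Xhat t * H - H * Xhat t + Xhat t * V t + Δ t * Xhat t) t)
    (t : ℝ) :
    HasDerivAt (fun s => X s * (Xhat s)⁻¹)
      ((X t * (Xhat t)⁻¹) * H - H * (X t * (Xhat t)⁻¹)
        - (X t * (Xhat t)⁻¹) * Δ t) t := by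
  simp only [nonsing_inv_eq_ringInverse]
  rw [← rightInvariantError_derivative_eq (hXhatinv t)]
  exact (hX t).mul_ringInverse (hXhat t) (hXhatinv t)

/-- If `dX/dt = [X,H] + X V` and `dX̂/dt = [X̂,H] + X̂ V + Δ X̂`, then the right-invariant
error `E = X X̂⁻¹` satisfies `dE/dt = [E,H] - E Δ`, where `[A,B] = AB - BA`. -/
theorem error_dynamics {m : ℕ}
    (X Xhat : ℝ → Matrix (Fin m) (Fin m) ℝ)
    (H : Matrix (Fin m) (Fin m) ℝ)
    (V Δ : ℝ → Matrix (Fin m) (Fin m) ℝ)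
    (hXinv : ∀ t, IsUnit (X t)) (hXhatinv : ∀ t, IsUnit (Xhat t))
    (hX : ∀ t, HasDerivAt X (X t * H - H * X t + X t * V t) t)
    (hXhat : ∀ t, HasDerivAt Xhat (Xhat t * H - H * Xhat t + Xhat t * V t + Δ t * Xhat t) t)
    (t : ℝ) :
    HasDerivAt (fun s => X s * (Xhat s)⁻¹)
      ((X t * (Xhat t)⁻¹) * H - H * (X t * (Xhat t)⁻¹)
        - (X t * (Xhat t)⁻¹) * Δ t) t :=
  error_dynamics_general X Xhat H V Δ hXhatinv hX hXhat t
end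

section
/- Let P(t) be a symmetric matrix-valued solution of the Riccati equation dP/dt = A P + P A^T - P C^T Q^{-1} C P + V satisfying p_m I ≤ P(t) ≤ p_M I for constants 0 < p_m ≤ p_M, with V(t) ≥ v_m I (v_m > 0) and Q(t) positive definite. Then along solutions of dx/dt = (A(t) - P C^T Q^{-1} C) x, the function W(x,t) = x^T P(t)^{-1} x satisfies dW/dt ≤ -(v_m/p_M^2) ||x||^2 ≤ -ρ W with ρ = v_m p_m / p_M^2; consequently ||x(t)|| ≤ sqrt(p_M/p_m) e^{-ρ t/2} ||x(0)||. -/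
/-!
Differentiating `W = xᵀ P⁻¹ x` along the closed loop and substituting the Riccati equation into
`dP⁻¹/dt = -P⁻¹ Ṗ P⁻¹`, the terms in `A` cancel and
`Ẇ = -xᵀ Cᵀ Q⁻¹ C x - (P⁻¹x)ᵀ V (P⁻¹x) ≤ -v_m |P⁻¹x|² ≤ -(v_m / p_M²) |x|²`.
Since `|x|² / p_M ≤ W ≤ |x|² / p_m`, this gives `Ẇ ≤ -ρ W`, so Grönwall's inequality yields
`W(t) ≤ e^{-ρt} W(0)`, which the same two bounds turn into the estimate on `|x(t)|`.
-/

open Matrix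

attribute [local instance] Matrix.linftyOpNormedAddCommGroup Matrix.linftyOpNormedSpace

attribute [local instance] Matrix.linftyOpNormedRing Matrix.linftyOpNormedAlgebra

namespace Matrix

theorem PosDef.of_posSemidef_sub_smul_one {n : Type*} [DecidableEq n] {M : Matrix n n ℝ} {c : ℝ}
    (hc : 0 < c) (h : (M - c • 1).PosSemidef) : M.PosDef := by
  simpa using (PosDef.one.smul hc).add_posSemidef h

variable {n : Type*} [Fintype n] [DecidableEq n] {M : Matrix n n ℝ} {c : ℝ}

theorem mul_dotProduct_self_le_of_posSemidef_sub_smul_one (h : (M - c • 1).PosSemidef)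
    (v : n → ℝ) :
    c * (v ⬝ᵥ v) ≤ v ⬝ᵥ M *ᵥ v := by
  have := h.dotProduct_mulVec_nonneg v
  simp only [star_trivial, sub_mulVec, smul_mulVec, one_mulVec, dotProduct_sub,
    dotProduct_smul, smul_eq_mul] at this
  linarith

theorem dotProduct_mulVec_le_of_posSemidef_smul_one_sub (h : (c • 1 - M).PosSemidef)
    (v : n → ℝ) :
    v ⬝ᵥ M *ᵥ v ≤ c * (v ⬝ᵥ v) := by
  have := h.dotProduct_mulVec_nonneg v
  simp only [star_trivial, sub_mulVec, smul_mulVec, one_mulVec, dotProduct_sub,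
    dotProduct_smul, smul_eq_mul] at this
  linarith

-- The witness is `w = √M v`.
open scoped MatrixOrder in
theorem PosSemidef.exists_dotProduct_mulVec_self_eq (hM : M.PosSemidef) (v : n → ℝ) :
    ∃ w, v ⬝ᵥ M *ᵥ v = w ⬝ᵥ w ∧ M *ᵥ v ⬝ᵥ M *ᵥ v = w ⬝ᵥ M *ᵥ w := by
  set S := CFC.sqrt M
  have hSS : S * S = M := CFC.sqrt_mul_sqrt_self M hM.nonneg
  have hS : Sᵀ = S := by
    simpa [IsHermitian] using (CFC.sqrt_nonneg M).posSemidef.isHermitian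
  have hdot : ∀ u z, S *ᵥ u ⬝ᵥ z = u ⬝ᵥ S *ᵥ z := fun u z => by
    rw [dotProduct_mulVec, ← vecMul_transpose, hS]
  refine ⟨S *ᵥ v, ?_, ?_⟩
  · rw [hdot, mulVec_mulVec, hSS]
  · rw [← hSS, ← mulVec_mulVec, hdot, ← mulVec_mulVec]

theorem PosDef.mulVec_inv_mulVec (hM : M.PosDef) (v : n → ℝ) : M *ᵥ M⁻¹ *ᵥ v = v := by
  rw [mulVec_mulVec, mul_nonsing_inv _ hM.det_pos.ne'.isUnit, one_mulVec]

theorem PosDef.exists_dotProduct_inv_mulVec_eq (hM : M.PosDef) (v : n → ℝ) :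
    ∃ w, v ⬝ᵥ M⁻¹ *ᵥ v = w ⬝ᵥ w ∧ v ⬝ᵥ v = w ⬝ᵥ M *ᵥ w := by
  obtain ⟨w, hvw, hMvw⟩ := hM.posSemidef.exists_dotProduct_mulVec_self_eq (M⁻¹ *ᵥ v)
  rw [hM.mulVec_inv_mulVec, dotProduct_comm] at hvw
  rw [hM.mulVec_inv_mulVec] at hMvw
  exact ⟨w, hvw, hMvw⟩

theorem PosDef.dotProduct_le_mul_dotProduct_inv_mulVec (hM : M.PosDef)
    (h : (c • 1 - M).PosSemidef) (v : n → ℝ) : v ⬝ᵥ v ≤ c * (v ⬝ᵥ M⁻¹ *ᵥ v) := by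
  obtain ⟨w, hinv, hself⟩ := hM.exists_dotProduct_inv_mulVec_eq v
  rw [hinv, hself]
  exact dotProduct_mulVec_le_of_posSemidef_smul_one_sub h w

theorem PosDef.mul_dotProduct_inv_mulVec_le (hM : M.PosDef)
    (h : (M - c • 1).PosSemidef) (v : n → ℝ) : c * (v ⬝ᵥ M⁻¹ *ᵥ v) ≤ v ⬝ᵥ v := by
  obtain ⟨w, hinv, hself⟩ := hM.exists_dotProduct_inv_mulVec_eq v
  rw [hinv, hself]
  exact mul_dotProduct_self_le_of_posSemidef_sub_smul_one h w

theorem PosDef.dotProduct_le_sq_mul_inv_mulVec_dotProduct (hM : M.PosDef) (hc : 0 ≤ c)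
    (h : (c • 1 - M).PosSemidef) (v : n → ℝ) :
    v ⬝ᵥ v ≤ c ^ 2 * (M⁻¹ *ᵥ v ⬝ᵥ M⁻¹ *ᵥ v) := by
  have hquad : v ⬝ᵥ M⁻¹ *ᵥ v ≤ c * (M⁻¹ *ᵥ v ⬝ᵥ M⁻¹ *ᵥ v) :=
    calc v ⬝ᵥ M⁻¹ *ᵥ v = M⁻¹ *ᵥ v ⬝ᵥ M *ᵥ M⁻¹ *ᵥ v := by
          rw [hM.mulVec_inv_mulVec, dotProduct_comm]
      _ ≤ c * (M⁻¹ *ᵥ v ⬝ᵥ M⁻¹ *ᵥ v) := dotProduct_mulVec_le_of_posSemidef_smul_one_sub h _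
  calc v ⬝ᵥ v ≤ c * (v ⬝ᵥ M⁻¹ *ᵥ v) := hM.dotProduct_le_mul_dotProduct_inv_mulVec h v
    _ ≤ c ^ 2 * (M⁻¹ *ᵥ v ⬝ᵥ M⁻¹ *ᵥ v) := by nlinarith [mul_le_mul_of_nonneg_left hquad hc]

end Matrix

section Calculus

variable {m n : Type*} [Fintype m] [Fintype n]

theorem HasDerivAt.matrix_apply {M : ℝ → Matrix m n ℝ} {M' : Matrix m n ℝ} {t : ℝ}
    (h : HasDerivAt M M' t) (i : m) (j : n) : HasDerivAt (fun s => M s i j) (M' i j) t :=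
  (entryLinearMap ℝ ℝ i j).toContinuousLinearMap.hasFDerivAt.comp_hasDerivAt t h

theorem HasDerivAt.dotProduct_mulVec_self {M : ℝ → Matrix n n ℝ} {M' : Matrix n n ℝ}
    {x : ℝ → n → ℝ} {x' : n → ℝ} {t : ℝ} (hM : HasDerivAt M M' t) (hx : HasDerivAt x x' t) :
    HasDerivAt (fun s => x s ⬝ᵥ M s *ᵥ x s)
      (x' ⬝ᵥ M t *ᵥ x t + x t ⬝ᵥ M' *ᵥ x t + x t ⬝ᵥ M t *ᵥ x') t := by
  have hxi := hasDerivAt_pi.1 hx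
  have hsum : HasDerivAt (fun s => ∑ i, x s i * ∑ j, M s i j * x s j)
      (∑ i, (x' i * ∑ j, M t i j * x t j + x t i * ∑ j, (M' i j * x t j + M t i j * x' j))) t :=
    .fun_sum fun i _ => (hxi i).fun_mul <| .fun_sum fun j _ => (hM.matrix_apply i j).fun_mul (hxi j)
  convert hsum using 1 <;>
    simp only [dotProduct, mulVec, mul_add, Finset.sum_add_distrib, Finset.mul_sum]
  ring

theorem HasDerivAt.dotProduct_mulVec_self_of_linear {M : ℝ → Matrix n n ℝ} {M' F : Matrix n n ℝ}
    {x : ℝ → n → ℝ} {t : ℝ} (hM : HasDerivAt M M' t) (hx : HasDerivAt x (F *ᵥ x t) t) :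
    HasDerivAt (fun s => x s ⬝ᵥ M s *ᵥ x s) (x t ⬝ᵥ (Fᵀ * M t + M' + M t * F) *ᵥ x t) t := by
  convert hM.dotProduct_mulVec_self hx using 1
  simp only [add_mulVec, dotProduct_add, ← mulVec_mulVec, dotProduct_mulVec (x t) Fᵀ,
    vecMul_transpose]

variable [DecidableEq n]

theorem HasDerivAt.matrix_inv {P : ℝ → Matrix n n ℝ} {P' : Matrix n n ℝ} {t : ℝ}
    (h : HasDerivAt P P' t) (hP : IsUnit (P t)) :
    HasDerivAt (fun s => (P s)⁻¹) (-((P t)⁻¹ * P' * (P t)⁻¹)) t := by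
  obtain ⟨u, hu⟩ := hP
  have hinv : HasFDerivAt Ring.inverse
      (-ContinuousLinearMap.mulLeftRight ℝ _ (P t)⁻¹ (P t)⁻¹) (P t) := by
    simpa [← hu, coe_units_inv] using hasFDerivAt_ringInverse u
  rw [show (fun s => (P s)⁻¹) = Ring.inverse ∘ P from funext fun s => nonsing_inv_eq_ringInverse _]
  refine (hinv.comp_hasDerivAt t h).congr_deriv ?_
  simp [Matrix.mul_assoc]

end Calculus

theorem le_mul_exp_of_hasDerivAt_le_mul {f f' : ℝ → ℝ} {K a b : ℝ}
    (hf : ∀ t, HasDerivAt f (f' t) t) (hbound : ∀ t, f' t ≤ K * f t) (hab : a ≤ b) :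
    f b ≤ f a * Real.exp (K * (b - a)) := by
  have := le_gronwallBound_of_liminf_deriv_right_le (ε := 0)
    (fun t _ => (hf t).continuousAt.continuousWithinAt)
    (fun t _ r hr => by
      simpa only [slope, vsub_eq_sub, smul_eq_mul] using
        (hf t).hasDerivWithinAt.liminf_right_slope_le hr)
    le_rfl (fun t _ => by simpa using hbound t) b ⟨hab, le_rfl⟩
  rwa [gronwallBound_ε0] at this

-- The left side is `Fᵀ P⁻¹ + d(P⁻¹)/dt + P⁻¹ F` for the closed-loop matrix `F = A - P Cᵀ Q⁻¹ C`.
theorem riccati_lyapunov_identity {n p R : Type*} [Fintype n] [Fintype p] [DecidableEq n]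
    [CommRing R] (A P Pinv V : Matrix n n R) (C : Matrix p n R) (Qinv : Matrix p p R)
    (hPinv : Pinv * P = 1) (hPinv' : P * Pinv = 1) (hP : Pᵀ = P) (hQ : Qinvᵀ = Qinv) :
    (A - P * Cᵀ * Qinv * C)ᵀ * Pinv
        + -(Pinv * (A * P + P * Aᵀ - P * Cᵀ * Qinv * C * P + V) * Pinv)
        + Pinv * (A - P * Cᵀ * Qinv * C) = -(Cᵀ * Qinv * C + Pinv * V * Pinv) := by
  have hl : ∀ X : Matrix n n R, Pinv * (P * X) = X := fun X => by
    rw [← Matrix.mul_assoc, hPinv, Matrix.one_mul]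
  simp only [transpose_sub, transpose_mul, transpose_transpose, hP, hQ, Matrix.mul_sub,
    Matrix.sub_mul, Matrix.mul_add, Matrix.add_mul, Matrix.mul_assoc, hPinv', Matrix.mul_one, hl]
  abel

theorem hasDerivAt_riccati_lyapunov {n p : Type*} [Fintype n] [Fintype p] [DecidableEq n]
    [DecidableEq p] {A V : Matrix n n ℝ} {C : Matrix p n ℝ} {Q : Matrix p p ℝ}
    {P : ℝ → Matrix n n ℝ} {x : ℝ → n → ℝ} {t : ℝ} (hP : (P t).PosDef) (hQ : Qᵀ = Q)
    (hPder : HasDerivAt P (A * P t + P t * Aᵀ - P t * Cᵀ * Q⁻¹ * C * P t + V) t)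
    (hx : HasDerivAt x ((A - P t * Cᵀ * Q⁻¹ * C) *ᵥ x t) t) :
    HasDerivAt (fun s => x s ⬝ᵥ (P s)⁻¹ *ᵥ x s)
      (-(x t ⬝ᵥ (Cᵀ * Q⁻¹ * C) *ᵥ x t) - ((P t)⁻¹ *ᵥ x t ⬝ᵥ V *ᵥ (P t)⁻¹ *ᵥ x t)) t := by
  have hunit := hP.det_pos.ne'.isUnit
  have hP_symm : (P t)ᵀ = P t := hP.isHermitian.eq
  have hvecMul : x t ᵥ* (P t)⁻¹ = (P t)⁻¹ *ᵥ x t := by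
    rw [← vecMul_transpose, transpose_nonsing_inv, hP_symm]
  convert (hPder.matrix_inv hP.isUnit).dotProduct_mulVec_self_of_linear hx using 1
  rw [riccati_lyapunov_identity _ _ _ _ _ _ (nonsing_inv_mul _ hunit) (mul_nonsing_inv _ hunit)
    hP_symm (by rw [transpose_nonsing_inv, hQ]), neg_mulVec, add_mulVec, dotProduct_neg,
    dotProduct_add, ← mulVec_mulVec _ ((P t)⁻¹ * V), ← mulVec_mulVec _ (P t)⁻¹ V,
    dotProduct_mulVec (x t) (P t)⁻¹, hvecMul, neg_add']

theorem riccati_lyapunov_deriv_le {n : Type*} [Fintype n] [DecidableEq n]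
    {K V P : Matrix n n ℝ} {v c : ℝ} (hK : K.PosSemidef) (hV : (V - v • 1).PosSemidef)
    (hv : 0 ≤ v) (hP : P.PosDef) (hc : 0 < c) (hPc : (c • 1 - P).PosSemidef) (x : n → ℝ) :
    -(x ⬝ᵥ K *ᵥ x) - (P⁻¹ *ᵥ x ⬝ᵥ V *ᵥ P⁻¹ *ᵥ x) ≤ -(v / c ^ 2) * (x ⬝ᵥ x) := by
  have hKx : 0 ≤ x ⬝ᵥ K *ᵥ x := by simpa using hK.dotProduct_mulVec_nonneg x
  have hVy := mul_dotProduct_self_le_of_posSemidef_sub_smul_one hV (P⁻¹ *ᵥ x)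
  have hxy := hP.dotProduct_le_sq_mul_inv_mulVec_dotProduct hc.le hPc x
  have : v / c ^ 2 * (x ⬝ᵥ x) ≤ v * (P⁻¹ *ᵥ x ⬝ᵥ P⁻¹ *ᵥ x) := by
    rw [div_mul_eq_mul_div, div_le_iff₀ (by positivity)]
    nlinarith [mul_le_mul_of_nonneg_left hxy hv]
  linarith

theorem riccati_lyapunov_deriv_le_neg_mul {n : Type*} [Fintype n] [DecidableEq n]
    {K V P : Matrix n n ℝ} {v c d : ℝ} (hK : K.PosSemidef) (hV : (V - v • 1).PosSemidef)
    (hv : 0 ≤ v) (hP : P.PosDef) (hc : 0 < c) (hPc : (c • 1 - P).PosSemidef)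
    (hPd : (P - d • 1).PosSemidef) (x : n → ℝ) :
    -(x ⬝ᵥ K *ᵥ x) - (P⁻¹ *ᵥ x ⬝ᵥ V *ᵥ P⁻¹ *ᵥ x) ≤ -(v * d / c ^ 2) * (x ⬝ᵥ P⁻¹ *ᵥ x) := by
  refine (riccati_lyapunov_deriv_le hK hV hv hP hc hPc x).trans ?_
  have := mul_le_mul_of_nonneg_left (hP.mul_dotProduct_inv_mulVec_le hPd x)
    (by positivity : 0 ≤ v / c ^ 2)
  calc _ ≤ -(v / c ^ 2 * (d * (x ⬝ᵥ P⁻¹ *ᵥ x))) := by linarith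
    _ = _ := by ring

theorem riccati_lyapunov_exponential_stability_general {m p : ℕ}
    (A V P : ℝ → Matrix (Fin m) (Fin m) ℝ)
    (C : ℝ → Matrix (Fin p) (Fin m) ℝ)
    (Q : ℝ → Matrix (Fin p) (Fin p) ℝ)
    (p_m p_M v_m : ℝ) (hpm : 0 < p_m) (hpmM : p_m ≤ p_M) (hvm : 0 < v_m)
    (hPder : ∀ t, HasDerivAt P
      (A t * P t + P t * (A t)ᵀ - P t * (C t)ᵀ * (Q t)⁻¹ * C t * P t + V t) t)
    (hPlow : ∀ t, (P t - p_m • (1 : Matrix (Fin m) (Fin m) ℝ)).PosSemidef)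
    (hPhigh : ∀ t, (p_M • (1 : Matrix (Fin m) (Fin m) ℝ) - P t).PosSemidef)
    (hV : ∀ t, (V t - v_m • (1 : Matrix (Fin m) (Fin m) ℝ)).PosSemidef)
    (hQ : ∀ t, (Q t).PosDef)
    (x : ℝ → (Fin m → ℝ))
    (hx : ∀ t, HasDerivAt x
      ((A t - P t * (C t)ᵀ * (Q t)⁻¹ * C t).mulVec (x t)) t) :
    (∀ t, ∃ W' : ℝ,
        HasDerivAt (fun s => x s ⬝ᵥ (P s)⁻¹.mulVec (x s)) W' t ∧
        W' ≤ -(v_m / p_M ^ 2) * (x t ⬝ᵥ x t) ∧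
        W' ≤ -(v_m * p_m / p_M ^ 2) * (x t ⬝ᵥ (P t)⁻¹.mulVec (x t))) ∧
    (∀ t : ℝ, 0 ≤ t →
      Real.sqrt (x t ⬝ᵥ x t) ≤
        Real.sqrt (p_M / p_m) * Real.exp (-(v_m * p_m / p_M ^ 2) * t / 2) *
          Real.sqrt (x 0 ⬝ᵥ x 0)) := by
  have hpM : 0 < p_M := hpm.trans_le hpmM
  have hP t : (P t).PosDef := .of_posSemidef_sub_smul_one hpm (hPlow t)
  have hW t := hasDerivAt_riccati_lyapunov (hP t) (by simpa using (hQ t).isHermitian.eq)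
    (hPder t) (hx t)
  have hK t : ((C t)ᵀ * (Q t)⁻¹ * C t).PosSemidef := by
    simpa using (hQ t).inv.posSemidef.conjTranspose_mul_mul_same (C t)
  have hW'_le_norm t :=
    riccati_lyapunov_deriv_le (hK t) (hV t) hvm.le (hP t) hpM (hPhigh t) (x t)
  have hW'_le_W t :=
    riccati_lyapunov_deriv_le_neg_mul (hK t) (hV t) hvm.le (hP t) hpM (hPhigh t) (hPlow t) (x t)
  refine ⟨fun t => ⟨_, hW t, hW'_le_norm t, hW'_le_W t⟩, fun t ht => ?_⟩
  set ρ := v_m * p_m / p_M ^ 2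
  have hdecay := le_mul_exp_of_hasDerivAt_le_mul hW hW'_le_W ht
  have hW0 := (hP 0).mul_dotProduct_inv_mulVec_le (hPlow 0) (x 0)
  simp only [sub_zero] at hdecay
  have hsq : x t ⬝ᵥ x t ≤ p_M / p_m * Real.exp (-ρ * t) * (x 0 ⬝ᵥ x 0) :=
    calc x t ⬝ᵥ x t ≤ p_M * (x t ⬝ᵥ (P t)⁻¹ *ᵥ x t) :=
          (hP t).dotProduct_le_mul_dotProduct_inv_mulVec (hPhigh t) (x t)
      _ ≤ p_M * ((x 0 ⬝ᵥ x 0) / p_m * Real.exp (-ρ * t)) := by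
          gcongr
          exact hdecay.trans (by gcongr; rwa [le_div_iff₀' hpm])
      _ = p_M / p_m * Real.exp (-ρ * t) * (x 0 ⬝ᵥ x 0) := by ring
  calc √(x t ⬝ᵥ x t) ≤ √(p_M / p_m * Real.exp (-ρ * t) * (x 0 ⬝ᵥ x 0)) := Real.sqrt_le_sqrt hsq
    _ = _ := by rw [Real.sqrt_mul (by positivity), Real.sqrt_mul (by positivity), ← Real.exp_half]

/-- Riccati-based Lyapunov analysis: if `P(t)` solves the continuous Riccati equation and is
uniformly bounded `p_m I ≤ P(t) ≤ p_M I`, with `V(t) ≥ v_m I` and `Q(t)` positive definite,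
then along solutions of `dx/dt = (A - P Cᵀ Q⁻¹ C)x`, the function `W = xᵀ P⁻¹ x` satisfies
`dW/dt ≤ -(v_m/p_M²)‖x‖² ≤ -ρ W` with `ρ = v_m p_m / p_M²`, and consequently
`‖x(t)‖ ≤ √(p_M/p_m) e^{-ρt/2} ‖x(0)‖` for `t ≥ 0`. -/
theorem riccati_lyapunov_exponential_stability {m p : ℕ}
    (A V P : ℝ → Matrix (Fin m) (Fin m) ℝ)
    (C : ℝ → Matrix (Fin p) (Fin m) ℝ)
    (Q : ℝ → Matrix (Fin p) (Fin p) ℝ)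
    (p_m p_M v_m : ℝ) (hpm : 0 < p_m) (hpmM : p_m ≤ p_M) (hvm : 0 < v_m)
    (hPsymm : ∀ t, (P t).IsSymm)
    (hPder : ∀ t, HasDerivAt P
      (A t * P t + P t * (A t)ᵀ - P t * (C t)ᵀ * (Q t)⁻¹ * C t * P t + V t) t)
    (hPlow : ∀ t, (P t - p_m • (1 : Matrix (Fin m) (Fin m) ℝ)).PosSemidef)
    (hPhigh : ∀ t, (p_M • (1 : Matrix (Fin m) (Fin m) ℝ) - P t).PosSemidef)
    (hV : ∀ t, (V t - v_m • (1 : Matrix (Fin m) (Fin m) ℝ)).PosSemidef)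
    (hQ : ∀ t, (Q t).PosDef)
    (x : ℝ → (Fin m → ℝ))
    (hx : ∀ t, HasDerivAt x
      ((A t - P t * (C t)ᵀ * (Q t)⁻¹ * C t).mulVec (x t)) t) :
    (∀ t, ∃ W' : ℝ,
        HasDerivAt (fun s => x s ⬝ᵥ (P s)⁻¹.mulVec (x s)) W' t ∧
        W' ≤ -(v_m / p_M ^ 2) * (x t ⬝ᵥ x t) ∧
        W' ≤ -(v_m * p_m / p_M ^ 2) * (x t ⬝ᵥ (P t)⁻¹.mulVec (x t))) ∧
    (∀ t : ℝ, 0 ≤ t →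
      Real.sqrt (x t ⬝ᵥ x t) ≤
        Real.sqrt (p_M / p_m) * Real.exp (-(v_m * p_m / p_M ^ 2) * t / 2) *
          Real.sqrt (x 0 ⬝ᵥ x 0)) :=
  riccati_lyapunov_exponential_stability_general A V P C Q p_m p_M v_m hpm hpmM hvm hPder hPlow
    hPhigh hV hQ x hx
end

section
/- The pair (Ā, C̄) is Kalman observable, where Ā = A ⊗ I_3 with A the (n+2)×(n+2) matrix A = [[D, 0],[B_n, 0]], D = [[0,1],[0,0]], B_n = [1_n 0_{n×1}] (1_n the all-ones column vector), and C̄ = [0_{3n×6} I_{3n}]. That is, the observability matrix of (Ā, C̄) has full column rank 3n+6. -/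
open Matrix Kronecker

/-- `D = [[0,1],[0,0]]`. -/
def Dmat : Matrix (Fin 2) (Fin 2) ℝ := !![0, 1; 0, 0]

/-- `B_n = [1_n  0_{n×1}]`: first column all ones, second column zero. -/
def Bmat (n : ℕ) : Matrix (Fin n) (Fin 2) ℝ := fun _ j => if j = 0 then 1 else 0

/-- `A = [[D, 0],[B_n, 0]] ∈ ℝ^{(n+2)×(n+2)}` (indexed by `Fin 2 ⊕ Fin n`). -/
def Amat (n : ℕ) : Matrix (Fin 2 ⊕ Fin n) (Fin 2 ⊕ Fin n) ℝ :=
  fromBlocks Dmat 0 (Bmat n) 0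

/-- `Ā = A ⊗ I₃`. -/
def Abar (n : ℕ) : Matrix ((Fin 2 ⊕ Fin n) × Fin 3) ((Fin 2 ⊕ Fin n) × Fin 3) ℝ :=
  Amat n ⊗ₖ (1 : Matrix (Fin 3) (Fin 3) ℝ)

/-- `C̄ = [0_{3n×6}  I_{3n}]`: selects the last `n` blocks of 3 coordinates. -/
def Cbar (n : ℕ) : Matrix (Fin n × Fin 3) ((Fin 2 ⊕ Fin n) × Fin 3) ℝ :=
  fun p q => if q = (Sum.inr p.1, p.2) then 1 else 0

/-- The Kalman observability matrix `[C̄; C̄Ā; C̄Ā²; …; C̄Ā^{m-1}]` with `m = 3(n+2)`. -/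
def obsMat (n : ℕ) :
    Matrix (Fin (3 * (n + 2)) × (Fin n × Fin 3)) ((Fin 2 ⊕ Fin n) × Fin 3) ℝ :=
  fun r q => (Cbar n * (Abar n) ^ (r.1 : ℕ)) r.2 q

lemma row0 (n : ℕ) (i : Fin n) (t : Fin 3) (q : (Fin 2 ⊕ Fin n) × Fin 3) :
    ((Cbar n * (Abar n) ^ 0 : Matrix (Fin n × Fin 3) ((Fin 2 ⊕ Fin n) × Fin 3) ℝ)) (i, t) q = if q = (Sum.inr i, t) then 1 else 0 := by
  simp [Cbar]

lemma rowCA (n : ℕ) (i : Fin n) (t : Fin 3) (q : (Fin 2 ⊕ Fin n) × Fin 3) :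
    ((Cbar n * Abar n : Matrix (Fin n × Fin 3) ((Fin 2 ⊕ Fin n) × Fin 3) ℝ)) (i, t) q = if q = (Sum.inl 0, t) then 1 else 0 := by
  rw [mul_apply]
  rw [Finset.sum_eq_single (Sum.inr i, t)]
  · obtain ⟨q1, q2⟩ := q
    rcases q1 with j | j
    · simp [Cbar, Abar, Amat, Bmat, Matrix.one_apply, Prod.ext_iff, eq_comm]
      fin_cases j <;> simp [Dmat, eq_comm]
    · simp [Cbar, Abar, Amat, Prod.ext_iff]
  · intro b _ hb
    simp [Cbar, hb]
  · simp

lemma row1 (n : ℕ) (i : Fin n) (t : Fin 3) (q : (Fin 2 ⊕ Fin n) × Fin 3) :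
    ((Cbar n * (Abar n) ^ 1 : Matrix (Fin n × Fin 3) ((Fin 2 ⊕ Fin n) × Fin 3) ℝ)) (i, t) q = if q = (Sum.inl 0, t) then 1 else 0 := by
  rw [pow_one]; exact rowCA n i t q

lemma row2 (n : ℕ) (i : Fin n) (t : Fin 3) (q : (Fin 2 ⊕ Fin n) × Fin 3) :
    ((Cbar n * (Abar n) ^ 2 : Matrix (Fin n × Fin 3) ((Fin 2 ⊕ Fin n) × Fin 3) ℝ)) (i, t) q = if q = (Sum.inl 1, t) then 1 else 0 := by
  rw [pow_two, ← Matrix.mul_assoc, mul_apply]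
  rw [Finset.sum_eq_single (Sum.inl 0, t)]
  · rw [rowCA]
    obtain ⟨q1, q2⟩ := q
    rcases q1 with j | j
    · simp [Abar, Amat, Dmat, Matrix.one_apply, Prod.ext_iff]
      fin_cases j <;> simp [eq_comm]
    · simp [Abar, Amat, Prod.ext_iff]
  · intro b _ hb
    rw [rowCA]; simp [hb]
  · simp

/-- The pair `(Ā, C̄)` is Kalman observable: the observability matrix has full column
rank `3n + 6 = 3(n+2)`. -/
theorem pair_Abar_Cbar_observable (n : ℕ) (hn : 1 ≤ n) :
    (obsMat n).rank = 3 * (n + 2) := by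
  have key : ∀ q : (Fin 2 ⊕ Fin n) × Fin 3,
      ∃ r : Fin (3 * (n + 2)) × (Fin n × Fin 3),
        ∀ q', obsMat n r q' = if q' = q then 1 else 0 := by
    rintro ⟨q1, t⟩
    obtain ⟨i0⟩ : Nonempty (Fin n) := ⟨⟨0, hn⟩⟩
    rcases q1 with j | i
    · fin_cases j
      · exact ⟨(⟨1, by omega⟩, (i0, t)), fun q' => row1 n i0 t q'⟩
      · exact ⟨(⟨2, by omega⟩, (i0, t)), fun q' => row2 n i0 t q'⟩
    · exact ⟨(⟨0, by omega⟩, (i, t)), fun q' => row0 n i t q'⟩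
  have hinj : Function.Injective (obsMat n).mulVecLin := by
    rw [← LinearMap.ker_eq_bot, LinearMap.ker_eq_bot']
    intro v hv
    funext q
    obtain ⟨r, hr⟩ := key q
    have := congrFun hv r
    simp only [mulVecLin_apply, mulVec, dotProduct] at this
    simp only [hr, ite_mul, one_mul, zero_mul] at this
    rw [Finset.sum_ite_eq' Finset.univ q v] at this
    simpa using this
  have : (obsMat n).rank = Module.finrank ℝ (((Fin 2 ⊕ Fin n) × Fin 3) → ℝ) := by
    rw [Matrix.rank, LinearMap.finrank_range_of_inj hinj]
  rw [this, Module.finrank_pi]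
  simp [Fintype.card_prod, Fintype.card_sum]
  ring
end
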